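/- Let (𝔪, ε) be a nonempty signed symmetric multisegment in the good-parity setting, with initial sequence Δ₁ ⪰ … ⪰ Δ_l and sign ε₀. If ε₀ = 1, then e(Δ₁) + e(Δ_l) ≠ 0. -/

import Mathlib

namespace AZ

/-- A segment in doubled coordinates: the pair `(a, b)` represents the segment
`[a/2, b/2]` whose endpoints lie in `(1/2)ℤ`.  Thus the end `e(Δ)` is `Δ.2 / 2`,
the beginning `b(Δ)` is `Δ.1 / 2`, `Δ` is centered iff `Δ.1 + Δ.2 = 0`, and
`c(Δ) = 1/2` iff `Δ.1 + Δ.2 = 2`. -/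
abbrev Seg := ℤ × ℤ

namespace Seg

/-- Well-formedness of a segment: `a ≤ b` and `a ≡ b [ZMOD 2]`, i.e. `b - a ∈ 2ℕ`. -/
def WF (Δ : Seg) : Prop := Δ.1 ≤ Δ.2 ∧ Δ.1 % 2 = Δ.2 % 2

/-- The dual (contragredient) segment `Δ∨ = [−b, −a]`. -/
def dual (Δ : Seg) : Seg := (-Δ.2, -Δ.1)

/-- `Δ⁻` : the segment with its end removed. -/
def trimEnd (Δ : Seg) : Seg := (Δ.1, Δ.2 - 2)

/-- `⁻Δ` : the segment with its beginning removed. -/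
def trimBeg (Δ : Seg) : Seg := (Δ.1 + 2, Δ.2)

/-- `⁺Δ` : the segment with its beginning extended. -/
def extBeg (Δ : Seg) : Seg := (Δ.1 - 2, Δ.2)

/-- The order on segments: `[x₁,y₁] ≤ [x₂,y₂]` iff `x₁ < x₂`, or `x₁ = x₂` and `y₁ ≥ y₂`. -/
def le (Δ₁ Δ₂ : Seg) : Prop := Δ₁.1 < Δ₂.1 ∨ (Δ₁.1 = Δ₂.1 ∧ Δ₂.2 ≤ Δ₁.2)

end Seg

/-- Labels `≤0`, `=0`, `≥0` for labeled segments. -/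
inductive Label
  | le0 | eq0 | ge0
deriving DecidableEq

/-- Numerical index of a label, used to order the labels `≤0 < =0 < ≥0`. -/
def Label.idx : Label → ℕ
  | .le0 => 0
  | .eq0 => 1
  | .ge0 => 2

/-- A labeled segment: a segment together with a label. -/
abbrev LSeg := Seg × Label

namespace LSeg

/-- The order `⪯` on labeled segments: segments labeled `≤0` precede those labeled `=0`,
which precede those labeled `≥0`; for equal labels `≥0` or `≤0` one compares the segments,
and for label `=0` one compares the ends. -/
def le (Λ₁ Λ₂ : LSeg) : Prop :=
  Λ₁.2.idx < Λ₂.2.idx ∨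
    (Λ₁.2 = Λ₂.2 ∧
      if Λ₁.2 = Label.eq0 then Λ₁.1.2 ≤ Λ₂.1.2 else Seg.le Λ₁.1 Λ₂.1)

/-- The strict order `≺` on labeled segments. -/
def lt (Λ₁ Λ₂ : LSeg) : Prop := LSeg.le Λ₁ Λ₂ ∧ Λ₁ ≠ Λ₂

/-- The contragredient of a labeled segment: for a centered segment the label `≤0`
becomes `≥0` and the labels `=0`, `≥0` are kept; for a non-centered segment the
label is flipped. -/
def dual (Λ : LSeg) : LSeg :=
  (Seg.dual Λ.1,
    if Λ.1.1 + Λ.1.2 = 0 then (if Λ.2 = Label.le0 then Label.ge0 else Λ.2)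
    else
      match Λ.2 with
      | Label.le0 => Label.ge0
      | Label.eq0 => Label.eq0
      | Label.ge0 => Label.le0)

end LSeg

/-- The forced label of a non-centered segment. -/
def forcedLabel (Δ : Seg) : Label := if 0 < Δ.1 + Δ.2 then Label.ge0 else Label.le0

/-- The labeling `s(𝔪)` of a multisegment: each non-centered segment gets its forced
label; a centered segment of multiplicity `m` contributes `⌊m/2⌋` copies labeled `≤0`,
`⌊m/2⌋` copies labeled `≥0`, and `m − 2⌊m/2⌋` copies labeled `=0`. -/
def smap (m : Multiset Seg) : Multiset LSeg :=
  (m.filter fun Δ => ¬ Δ.1 + Δ.2 = 0).map (fun Δ => (Δ, forcedLabel Δ)) +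
    (m.toFinset.filter fun Δ => Δ.1 + Δ.2 = 0).val.bind (fun Δ =>
      Multiset.replicate (m.count Δ / 2) (Δ, Label.le0) +
        Multiset.replicate (m.count Δ / 2) (Δ, Label.ge0) +
        Multiset.replicate (m.count Δ % 2) (Δ, Label.eq0))

/-- A labeled segment is special (the initial sequence stops there): `[0,0]` labeled
`≥0` or `=0` in the integer case; `[1/2,1/2]`, or `[−1/2,1/2]` labeled `≥0` or `=0`
with `ε([−1/2,1/2]) = −1`, in the half-integer case. -/
def Special (ε : Seg → ℤ) (Λ : LSeg) : Prop :=
  (Λ.1 = ((0 : ℤ), (0 : ℤ)) ∧ (Λ.2 = Label.ge0 ∨ Λ.2 = Label.eq0)) ∨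
    Λ.1 = ((1 : ℤ), (1 : ℤ)) ∨
      (Λ.1 = ((-1 : ℤ), (1 : ℤ)) ∧ (Λ.2 = Label.ge0 ∨ Λ.2 = Label.eq0) ∧ ε (-1, 1) = -1)

instance (ε : Seg → ℤ) (Λ : LSeg) : Decidable (Special ε Λ) := by
  unfold Special; infer_instance

/-- The condition for `next` to be a successor of `cur` in the initial sequence:
`next ≺ cur`, `e(next) = e(cur) − 1`, and opposite signs when both are centered. -/
def Succ (ε : Seg → ℤ) (cur next : LSeg) : Prop :=
  LSeg.lt next cur ∧ next.1.2 = cur.1.2 - 2 ∧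
    (cur.1.1 + cur.1.2 = 0 → next.1.1 + next.1.2 = 0 → ε next.1 = - ε cur.1)

/-- `Δ 1, …, Δ l` is the initial sequence in the algorithm for `(m, ε)`:
`Δ 1` is the `⪯`-largest element of `s(m)` with maximal end; recursively,
`Δ (j+1)` is the `⪯`-largest successor of `Δ j`; the sequence stops when the
current segment is special or no successor exists. -/
structure IsInitSeq (m : Multiset Seg) (ε : Seg → ℤ) (Δ : ℕ → LSeg) (l : ℕ) : Prop where
  one_le : 1 ≤ l
  mem : ∀ j, 1 ≤ j → j ≤ l → Δ j ∈ smap m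
  first_max_end : ∀ Λ ∈ smap m, Λ.1.2 ≤ (Δ 1).1.2
  first_max : ∀ Λ ∈ smap m, Λ.1.2 = (Δ 1).1.2 → LSeg.le Λ (Δ 1)
  not_special : ∀ j, 1 ≤ j → j < l → ¬ Special ε (Δ j)
  succ : ∀ j, 1 ≤ j → j < l → Succ ε (Δ j) (Δ (j + 1))
  succ_max : ∀ j, 1 ≤ j → j < l → ∀ Λ ∈ smap m, Succ ε (Δ j) Λ → LSeg.le Λ (Δ (j + 1))
  last : Special ε (Δ l) ∨ ∀ Λ ∈ smap m, ¬ Succ ε (Δ l) Λ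

/-- The sign `ε₀`: `−1` if the sequence stopped at a special segment, `1` otherwise. -/
def eps0 (ε : Seg → ℤ) (Δ : ℕ → LSeg) (l : ℕ) : ℤ :=
  if Special ε (Δ l) then -1 else 1

/-- The number `n₀` of centered segments of `m`. -/
def nCentered (m : Multiset Seg) : ℕ := (m.filter fun Δ => Δ.1 + Δ.2 = 0).card

/-- The sign `ε₁` of the centered segment `𝔪₁` in the case `ε₀ = −1`:
`(−1)^(n₀+1)·ε([0,0])` in the integer case, `(−1)^(n₀)` in the half-integer case. -/
def epsOne (m : Multiset Seg) (ε : Seg → ℤ) (Δ : ℕ → LSeg) : ℤ :=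
  if (Δ 1).1.2 % 2 = 0 then (-1) ^ (nCentered m + 1) * ε (0, 0)
  else (-1) ^ nCentered m

/-- The signed multisegment `𝔪₁`: if `ε₀ = −1` it is the centered segment
`[−e(Δ₁), e(Δ₁)]` with sign `ε₁`; otherwise it is
`[e(Δ_l), e(Δ₁)] + [−e(Δ₁), −e(Δ_l)]` (non-centered segments carry sign `1`). -/
def mOne (m : Multiset Seg) (ε : Seg → ℤ) (Δ : ℕ → LSeg) (l : ℕ) : Multiset (Seg × ℤ) :=
  if Special ε (Δ l) then {((-(Δ 1).1.2, (Δ 1).1.2), epsOne m ε Δ)}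
  else {(((Δ l).1.2, (Δ 1).1.2), 1), ((-(Δ 1).1.2, -(Δ l).1.2), 1)}

/-- The labeled copies `Δ 1, …, Δ l` whose end gets removed. -/
def DEnd (Δ : ℕ → LSeg) (l : ℕ) : Multiset LSeg := (Finset.Icc 1 l).val.map Δ

/-- The labeled copies (the contragredients of the `Δ j`) whose beginning gets removed. -/
def DBeg (Δ : ℕ → LSeg) (l : ℕ) : Multiset LSeg := (DEnd Δ l).map LSeg.dual

/-- The labeled copies trimmed on both sides. -/
def DBoth (Δ : ℕ → LSeg) (l : ℕ) : Multiset LSeg := DEnd Δ l ∩ DBeg Δ l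

/-- The multisegment `𝔪#`: remove the ends of the `Δ j` and the beginnings of their
contragredients (one labeled copy each, both trims if the copy occurs in both lists),
keep all other copies, and discard empty segments. -/
def mHash (m : Multiset Seg) (Δ : ℕ → LSeg) (l : ℕ) : Multiset Seg :=
  (smap m - DEnd Δ l - (DBeg Δ l - DBoth Δ l)).map Prod.fst +
    ((DBoth Δ l).map (fun Λ => ((Λ.1.1 + 2, Λ.1.2 - 2) : Seg)) +
        (DEnd Δ l - DBoth Δ l).map (fun Λ => ((Λ.1.1, Λ.1.2 - 2) : Seg)) +
        (DBeg Δ l - DBoth Δ l).map (fun Λ => ((Λ.1.1 + 2, Λ.1.2) : Seg))).filter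
      fun Δ0 => Δ0.1 ≤ Δ0.2

/-- The trimmed segment `Λ_{i_j}#` obtained from `Δ j`. -/
def trimAt (Δ : ℕ → LSeg) (l : ℕ) (j : ℕ) : Seg :=
  if Δ j ∈ DBeg Δ l then ((Δ j).1.1 + 2, (Δ j).1.2 - 2)
  else ((Δ j).1.1, (Δ j).1.2 - 2)

/-- The sign function `ε#` on (centered) segments of `𝔪#`. -/
def epsHash (m : Multiset Seg) (ε : Seg → ℤ) (Δ : ℕ → LSeg) (l : ℕ) : Seg → ℤ :=
  fun Δ0 =>
    if ∃ j ∈ Finset.Icc 1 l, ((Δ j).1.1 + (Δ j).1.2 = 0 ∧ trimAt Δ l j = Δ0) then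
      eps0 ε Δ l * ε (Δ0.1 - 2, Δ0.2 + 2)
    else if ∃ j ∈ Finset.Icc 1 l,
        ((Δ j).1.1 + (Δ j).1.2 = 2 ∧ trimAt Δ l j = Δ0 ∧ Δ0 ∉ m) then
      eps0 ε Δ l
    else if ∃ j ∈ Finset.Icc 1 l,
        ((Δ j).1.1 + (Δ j).1.2 = 2 ∧ trimAt Δ l j = Δ0 ∧ Δ0 ∈ m) then
      -(eps0 ε Δ l) * ε Δ0
    else eps0 ε Δ l * ε Δ0

/-- The good-parity duality algorithm `AD`, as a relation between the input `(m, ε)`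
and the output signed multisegment: `AD(0) = 0` and
`AD(𝔪, ε) = (𝔪₁, ε₁) + AD(𝔪#, ε#)`. -/
inductive IsAD : Multiset Seg → (Seg → ℤ) → Multiset (Seg × ℤ) → Prop
  | zero (ε : Seg → ℤ) : IsAD 0 ε 0
  | step {m : Multiset Seg} {ε : Seg → ℤ} {Δ : ℕ → LSeg} {l : ℕ} {d : Multiset (Seg × ℤ)}
      (hm : m ≠ 0) (hseq : IsInitSeq m ε Δ l)
      (hrec : IsAD (mHash m Δ l) (epsHash m ε Δ l) d) :
      IsAD m ε (mOne m ε Δ l + d)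

/-- A valid signed symmetric multisegment in the good-parity setting. -/
structure GoodInput (m : Multiset Seg) (ε : Seg → ℤ) : Prop where
  wf : ∀ Δ0 ∈ m, Seg.WF Δ0
  symm : m.map Seg.dual = m
  parity : ∀ Δ₁ ∈ m, ∀ Δ₂ ∈ m, Δ₁.2 % 2 = Δ₂.2 % 2
  sign : ∀ Δ0, ε Δ0 = 1 ∨ ε Δ0 = -1

/-! If `e(Δ₁) + e(Δ_l) = 0`, then, since the ends drop by one at each step and every beginning
is `≥ -e(Δ₁)` by symmetry, `Δ_l = [-e(Δ₁), -e(Δ₁)]`. Along the `≤0`-labelled tail of the sequence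
the beginnings drop strictly, which forces every segment there to be a singleton; their duals
`[e, e]` lie in `𝔪`, and maximality of each step then forces the positive half of the sequence to
be the singletons `[e(Δ₁), e(Δ₁)], [e(Δ₁) - 1, e(Δ₁) - 1], …` labelled `≥0`. In the half-integer
case this reaches the special segment `[1/2, 1/2]` before `Δ_l`. In the integer case the segment
with end `0` is special unless it is `[0, 0]` labelled `≤0`, and then its `≥0` twin would have been
chosen instead. Hence `Δ_l` is special and `ε₀ = -1`. -/

variable {m : Multiset Seg} {ε : Seg → ℤ} {Δ : ℕ → LSeg} {l : ℕ}

theorem mem_smap_iff {Δ0 : Seg} {lab : Label} :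
    (Δ0, lab) ∈ smap m ↔ Δ0 ∈ m ∧
      (Δ0.1 + Δ0.2 ≠ 0 ∧ lab = forcedLabel Δ0 ∨
        Δ0.1 + Δ0.2 = 0 ∧ (lab ≠ .eq0 ∧ 2 ≤ m.count Δ0 ∨ lab = .eq0 ∧ m.count Δ0 % 2 = 1)) := by
  simp only [smap, Multiset.mem_add, Multiset.mem_map, Multiset.mem_filter, Multiset.mem_bind,
    Finset.mem_val, Finset.mem_filter, Multiset.mem_toFinset, Multiset.mem_replicate,
    Prod.mk.injEq]
  constructor
  · rintro (⟨a, ⟨ha, hc⟩, rfl, rfl⟩ |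
      ⟨a, ⟨ha, hc⟩, (⟨hn, rfl, rfl⟩ | ⟨hn, rfl, rfl⟩) | ⟨hn, rfl, rfl⟩⟩) <;>
      simp_all <;> omega
  · rintro ⟨ha, ⟨hc, rfl⟩ | ⟨hc, ⟨hlab, hn⟩ | ⟨rfl, hn⟩⟩⟩
    · exact Or.inl ⟨Δ0, ⟨ha, hc⟩, rfl, rfl⟩
    · refine Or.inr ⟨Δ0, ⟨ha, hc⟩, ?_⟩
      cases lab <;> simp_all <;> omega
    · exact Or.inr ⟨Δ0, ⟨ha, hc⟩, Or.inr ⟨by omega, rfl, rfl⟩⟩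

theorem fst_mem_of_mem_smap {Λ : LSeg} (h : Λ ∈ smap m) : Λ.1 ∈ m :=
  (mem_smap_iff.1 h).1

theorem exists_mem_smap {Δ0 : Seg} (h : Δ0 ∈ m) : ∃ lab, (Δ0, lab) ∈ smap m := by
  have hpos := Multiset.count_pos.2 h
  by_cases hc : Δ0.1 + Δ0.2 = 0
  · by_cases hodd : m.count Δ0 % 2 = 1
    · exact ⟨.eq0, mem_smap_iff.2 ⟨h, Or.inr ⟨hc, Or.inr ⟨rfl, hodd⟩⟩⟩⟩
    · exact ⟨.ge0, mem_smap_iff.2 ⟨h, Or.inr ⟨hc, Or.inl ⟨by decide, by omega⟩⟩⟩⟩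
  · exact ⟨_, mem_smap_iff.2 ⟨h, Or.inl ⟨hc, rfl⟩⟩⟩

theorem mem_smap_ge0 {Δ0 : Seg} (h : Δ0 ∈ m) (hpos : 0 < Δ0.1 + Δ0.2) :
    (Δ0, .ge0) ∈ smap m :=
  mem_smap_iff.2 ⟨h, Or.inl ⟨hpos.ne', by rw [forcedLabel, if_pos hpos]⟩⟩

theorem mem_smap_ge0_of_le0 {Δ0 : Seg} (h : (Δ0, .le0) ∈ smap m) (hc : Δ0.1 + Δ0.2 = 0) :
    (Δ0, .ge0) ∈ smap m := by
  obtain ⟨hm, ⟨hc', -⟩ | ⟨-, ⟨-, hn⟩ | ⟨hlab, -⟩⟩⟩ := mem_smap_iff.1 h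
  · exact absurd hc hc'
  · exact mem_smap_iff.2 ⟨hm, Or.inr ⟨hc, Or.inl ⟨by decide, hn⟩⟩⟩
  · cases hlab

theorem add_nonneg_of_mem_smap {Λ : LSeg} (h : Λ ∈ smap m) (hlab : Λ.2 ≠ .le0) :
    0 ≤ Λ.1.1 + Λ.1.2 := by
  obtain ⟨-, ⟨-, hf⟩ | ⟨hc, -⟩⟩ := mem_smap_iff.1 h
  · by_contra hneg
    rw [forcedLabel, if_neg (by omega)] at hf
    exact hlab hf
  · exact hc.ge

theorem label_eq_le0_of_not_special {Λ : LSeg} (h : Λ ∈ smap m) (hwf : Λ.1.1 ≤ Λ.1.2)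
    (hend : Λ.1.2 = 0) (hns : ¬ Special ε Λ) : Λ.2 = .le0 := by
  by_contra hlab
  have := add_nonneg_of_mem_smap h hlab
  refine hns (Or.inl ⟨Prod.ext (by omega) hend, ?_⟩)
  cases h : Λ.2 <;> simp_all

theorem LSeg.le_ge0_iff {Λ₁ Λ₂ : LSeg} (h₁ : Λ₁.2 = .ge0) :
    LSeg.le Λ₁ Λ₂ ↔ Λ₂.2 = .ge0 ∧ Seg.le Λ₁.1 Λ₂.1 := by
  obtain ⟨_, l₂⟩ := Λ₂
  cases l₂ <;> simp [LSeg.le, h₁, Label.idx]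

theorem LSeg.le_le0_iff {Λ₁ Λ₂ : LSeg} (h₂ : Λ₂.2 = .le0) :
    LSeg.le Λ₁ Λ₂ ↔ Λ₁.2 = .le0 ∧ Seg.le Λ₁.1 Λ₂.1 := by
  obtain ⟨_, l₁⟩ := Λ₁
  cases l₁ <;> simp [LSeg.le, h₂, Label.idx]

theorem LSeg.fst_eq_snd_of_singleton_le {e : ℤ} {Λ : LSeg} (h : LSeg.le ((e, e), .ge0) Λ)
    (hend : Λ.1.2 ≤ e) (hwf : Λ.1.1 ≤ Λ.1.2) : Λ.1.1 = Λ.1.2 ∧ Λ.2 = .ge0 := by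
  obtain ⟨hlab, hb | ⟨hb, -⟩⟩ := (LSeg.le_ge0_iff rfl).1 h
  · exact absurd hb (by simp only; omega)
  · exact ⟨by simp only at hb; omega, hlab⟩

theorem Succ.label_le0_and_width_le {cur next : LSeg} (h : Succ ε cur next)
    (hlab : cur.2 = .le0) (hcur : Seg.WF cur.1) (hnext : Seg.WF next.1) :
    next.2 = .le0 ∧ cur.1.2 - cur.1.1 ≤ next.1.2 - next.1.1 := by
  obtain ⟨⟨hle, -⟩, hend, -⟩ := h
  obtain ⟨hlab', hb | ⟨-, he⟩⟩ := (LSeg.le_le0_iff hlab).1 hle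
  · exact ⟨hlab', by unfold Seg.WF at hcur hnext; omega⟩
  · omega

theorem GoodInput.dual_mem (hgood : GoodInput m ε) {Δ0 : Seg} (h : Δ0 ∈ m) :
    Seg.dual Δ0 ∈ m := by
  rw [← hgood.symm]
  exact Multiset.mem_map_of_mem _ h

namespace IsInitSeq

theorem fst_mem (hseq : IsInitSeq m ε Δ l) {j : ℕ} (hj : 1 ≤ j) (hjl : j ≤ l) : (Δ j).1 ∈ m :=
  fst_mem_of_mem_smap (hseq.mem j hj hjl)

theorem wf (hgood : GoodInput m ε) (hseq : IsInitSeq m ε Δ l) {j : ℕ} (hj : 1 ≤ j)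
    (hjl : j ≤ l) : Seg.WF (Δ j).1 :=
  hgood.wf _ (hseq.fst_mem hj hjl)

theorem end_eq (hseq : IsInitSeq m ε Δ l) {j : ℕ} (hj : 1 ≤ j) (hjl : j ≤ l) :
    (Δ j).1.2 = (Δ 1).1.2 - 2 * ((j : ℤ) - 1) := by
  induction j, hj using Nat.le_induction with
  | base => simp
  | succ n hn ih =>
    rw [(hseq.succ n hn (by omega)).2.1, ih (by omega)]
    push_cast
    ring

theorem snd_le_end (hseq : IsInitSeq m ε Δ l) {Δ0 : Seg} (h : Δ0 ∈ m) : Δ0.2 ≤ (Δ 1).1.2 := by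
  obtain ⟨lab, hlab⟩ := exists_mem_smap h
  exact hseq.first_max_end _ hlab

theorem neg_end_le_fst (hgood : GoodInput m ε) (hseq : IsInitSeq m ε Δ l) {Δ0 : Seg}
    (h : Δ0 ∈ m) : -(Δ 1).1.2 ≤ Δ0.1 := by
  have := hseq.snd_le_end (hgood.dual_mem h)
  simp only [Seg.dual] at this
  omega

theorem width_le_of_label_le0 (hgood : GoodInput m ε) (hseq : IsInitSeq m ε Δ l) {j : ℕ}
    (hj : 1 ≤ j) (hjl : j ≤ l) (hlab : (Δ j).2 = .le0) :
    (Δ j).1.2 - (Δ j).1.1 ≤ (Δ l).1.2 - (Δ l).1.1 := by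
  induction hjl using Nat.decreasingInduction with
  | self => rfl
  | of_succ j hjl ih =>
    obtain ⟨hlab', hwidth⟩ := (hseq.succ j hj hjl).label_le0_and_width_le hlab
      (hseq.wf hgood hj hjl.le) (hseq.wf hgood (by omega) hjl)
    exact hwidth.trans (ih (by omega) hlab')

theorem le_succ_of_label_ge0 (hseq : IsInitSeq m ε Δ l) {j : ℕ} (hj : 1 ≤ j) (hjl : j < l)
    (hlab : (Δ j).2 = .ge0) (hc : (Δ j).1.1 + (Δ j).1.2 ≠ 0) {Λ : LSeg} (hΛ : Λ ∈ smap m)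
    (hΛlab : Λ.2 = .ge0) (hb : Λ.1.1 < (Δ j).1.1) (he : Λ.1.2 = (Δ j).1.2 - 2) :
    LSeg.le Λ (Δ (j + 1)) := by
  refine hseq.succ_max j hj hjl Λ hΛ ⟨⟨?_, ?_⟩, he, fun hc' => absurd hc' hc⟩
  · exact (LSeg.le_ge0_iff hΛlab).2 ⟨hlab, Or.inl hb⟩
  · rintro rfl
    exact hb.false

theorem length_eq_of_ends_cancel (hseq : IsInitSeq m ε Δ l)
    (hsum : (Δ 1).1.2 + (Δ l).1.2 = 0) : (l : ℤ) = (Δ 1).1.2 + 1 := by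
  have := hseq.end_eq hseq.one_le le_rfl
  omega

theorem fst_eq_snd_of_ends_cancel (hgood : GoodInput m ε) (hseq : IsInitSeq m ε Δ l)
    (hsum : (Δ 1).1.2 + (Δ l).1.2 = 0) {j : ℕ} (hj : 1 ≤ j) (hjl : j ≤ l)
    (hlab : (Δ j).2 = .le0) : (Δ j).1.1 = (Δ j).1.2 := by
  have hwidth := hseq.width_le_of_label_le0 hgood hj hjl hlab
  have hlast := hseq.neg_end_le_fst hgood (hseq.fst_mem hseq.one_le le_rfl)
  have hwf := (hseq.wf hgood hj hjl).1
  omega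

/-- The segment `Δ (l + 1 - j)` has end `-e(Δ j)`; when that is negative it is a `≤0`-labeled
singleton, whose dual is the singleton at `e(Δ j)`. -/
theorem singleton_mem_of_ends_cancel (hgood : GoodInput m ε) (hseq : IsInitSeq m ε Δ l)
    (hsum : (Δ 1).1.2 + (Δ l).1.2 = 0) {j : ℕ} (hj : 1 ≤ j) (hjl : j ≤ l)
    (hpos : 0 < (Δ j).1.2) : ((Δ j).1.2, (Δ j).1.2) ∈ m := by
  have hlen := hseq.length_eq_of_ends_cancel hsum
  have hi : 1 ≤ l + 1 - j := by omega
  have hil : l + 1 - j ≤ l := by omega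
  have hend : (Δ (l + 1 - j)).1.2 = -(Δ j).1.2 := by
    rw [hseq.end_eq hi hil, hseq.end_eq hj hjl]
    push_cast [show j ≤ l + 1 by omega]
    omega
  have hwf := (hseq.wf hgood hi hil).1
  have hlab : (Δ (l + 1 - j)).2 = .le0 := by
    by_contra hlab
    have := add_nonneg_of_mem_smap (hseq.mem _ hi hil) hlab
    omega
  have hsingle := hseq.fst_eq_snd_of_ends_cancel hgood hsum hi hil hlab
  have hdual := hgood.dual_mem (hseq.fst_mem hi hil)
  rwa [Seg.dual, hsingle, hend, neg_neg] at hdual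

theorem eq_singleton_of_ends_cancel (hgood : GoodInput m ε) (hseq : IsInitSeq m ε Δ l)
    (hsum : (Δ 1).1.2 + (Δ l).1.2 = 0) {j : ℕ} (hj : 1 ≤ j) (hjl : j ≤ l)
    (hpos : 0 < (Δ j).1.2) : (Δ j).1.1 = (Δ j).1.2 ∧ (Δ j).2 = .ge0 := by
  have hcand : ∀ i, 1 ≤ i → i ≤ l → 0 < (Δ i).1.2 →
      (((Δ i).1.2, (Δ i).1.2), .ge0) ∈ smap m := fun i hi hil hpos =>
    mem_smap_ge0 (hseq.singleton_mem_of_ends_cancel hgood hsum hi hil hpos) (by simp only; omega)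
  refine LSeg.fst_eq_snd_of_singleton_le ?_ le_rfl (hseq.wf hgood hj hjl).1
  induction j, hj using Nat.le_induction with
  | base => exact hseq.first_max _ (hcand 1 le_rfl hjl hpos) rfl
  | succ n hn ih =>
    have hend := (hseq.succ n hn (by omega)).2.1
    obtain ⟨hb, hlab⟩ := LSeg.fst_eq_snd_of_singleton_le (ih (by omega) (by omega)) le_rfl
      (hseq.wf hgood hn (by omega)).1
    exact hseq.le_succ_of_label_ge0 hn (by omega) hlab (by omega) (hcand _ (by omega) hjl hpos)
      rfl (by simp only; omega) (by simp only; omega)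

theorem even_end_of_ends_cancel (hgood : GoodInput m ε) (hseq : IsInitSeq m ε Δ l)
    (hsum : (Δ 1).1.2 + (Δ l).1.2 = 0) : Even (Δ 1).1.2 := by
  by_contra hodd
  obtain ⟨k, hk⟩ := Int.not_even_iff_odd.1 hodd
  have hlen := hseq.length_eq_of_ends_cancel hsum
  have hl := hseq.one_le
  lift k to ℕ using (by omega)
  have hj : k + 1 ≤ l := by omega
  have hend : (Δ (k + 1)).1.2 = 1 := by
    rw [hseq.end_eq (by omega) hj]
    push_cast
    omega
  obtain ⟨hb, -⟩ := hseq.eq_singleton_of_ends_cancel hgood hsum (by omega) hj (by omega)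
  exact hseq.not_special (k + 1) (by omega) (by omega)
    (Or.inr (Or.inl (Prod.ext (by omega) hend)))

theorem special_last_of_ends_cancel (hgood : GoodInput m ε) (hseq : IsInitSeq m ε Δ l)
    (hsum : (Δ 1).1.2 + (Δ l).1.2 = 0) : Special ε (Δ l) := by
  by_contra hns
  obtain ⟨k, hk⟩ := hseq.even_end_of_ends_cancel hgood hsum
  have hlen := hseq.length_eq_of_ends_cancel hsum
  lift k to ℕ using (by omega)
  have hj : k + 1 ≤ l := by omega
  have hend : (Δ (k + 1)).1.2 = 0 := by
    rw [hseq.end_eq (by omega) hj]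
    push_cast
    omega
  have hnsj : ¬ Special ε (Δ (k + 1)) := by
    rcases hj.lt_or_eq with hjl | hjl
    · exact hseq.not_special _ (by omega) hjl
    · rwa [hjl]
  have hlab := label_eq_le0_of_not_special (hseq.mem _ (by omega) hj)
    (hseq.wf hgood (by omega) hj).1 hend hnsj
  have hzero : (Δ (k + 1)).1 = (0, 0) :=
    Prod.ext ((hseq.fst_eq_snd_of_ends_cancel hgood hsum (by omega) hj hlab).trans hend) hend
  have hcand : (((0, 0) : Seg), Label.ge0) ∈ smap m := by
    refine mem_smap_ge0_of_le0 ?_ rfl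
    rw [← hzero, ← hlab]
    exact hseq.mem _ (by omega) hj
  have hle : LSeg.le ((0, 0), .ge0) (Δ (k + 1)) := by
    rcases k.eq_zero_or_pos with rfl | hk
    · exact hseq.first_max _ hcand (by simp only at hk ⊢; omega)
    · have hendk : (Δ k).1.2 = 2 := by
        rw [hseq.end_eq hk (by omega)]
        omega
      obtain ⟨hb, hlabk⟩ := hseq.eq_singleton_of_ends_cancel hgood hsum hk (by omega) (by omega)
      exact hseq.le_succ_of_label_ge0 hk (by omega) hlabk (by omega) hcand rfl
        (by simp only; omega) (by simp only; omega)
  have hge0 := ((LSeg.le_ge0_iff rfl).1 hle).1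
  rw [hlab] at hge0
  cases hge0

end IsInitSeq

theorem stmt11_general (m : Multiset Seg) (ε : Seg → ℤ) (hgood : GoodInput m ε)
    (Δ : ℕ → LSeg) (l : ℕ) (hseq : IsInitSeq m ε Δ l)
    (h : eps0 ε Δ l = 1) :
    (Δ 1).1.2 + (Δ l).1.2 ≠ 0 := by
  intro hsum
  simp [eps0, hseq.special_last_of_ends_cancel hgood hsum] at h

/-- Lemma 7.2.1: if `ε₀ = 1`, then `e(Δ₁) + e(Δ_l) ≠ 0`. -/
theorem stmt11 (m : Multiset Seg) (ε : Seg → ℤ) (hgood : GoodInput m ε) (hne : m ≠ 0)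
    (Δ : ℕ → LSeg) (l : ℕ) (hseq : IsInitSeq m ε Δ l)
    (h : eps0 ε Δ l = 1) :
    (Δ 1).1.2 + (Δ l).1.2 ≠ 0 :=
  stmt11_general m ε hgood Δ l hseq h

end AZ
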